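/- Suppose S(A,b) ≠ ∅. Then for every i there exists j with a_{ij} ≥ b_i and T_L(a_{ij}, x̄_j) = b_i; that is, the set J̄_i = {j : a_{ij} ≥ b_i and T_L(a_{ij}, x̄_j) = b_i} is nonempty for each i. -/

import Mathlib

/-- The Łukasiewicz t-norm. -/
noncomputable def TL (a x : ℝ) : ℝ := max (a + x - 1) 0

/-- The candidate maximum solution `x̄` (empty min = 1, handled by the `if`). -/
noncomputable def xbar {m n : ℕ} [NeZero m] (A : Fin m → Fin n → ℝ) (b : Fin m → ℝ)
    (j : Fin n) : ℝ :=
  Finset.univ.inf' Finset.univ_nonempty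
    (fun i => if b i ≤ A i j then b i + 1 - A i j else 1)

/-- `x` is a feasible solution of the system `A φ x = b`. -/
def Feasible {m n : ℕ} [NeZero m] [NeZero n] (A : Fin m → Fin n → ℝ) (b : Fin m → ℝ)
    (x : Fin n → ℝ) : Prop :=
  (∀ j, x j ∈ Set.Icc (0:ℝ) 1) ∧
  ∀ i, Finset.univ.sup' Finset.univ_nonempty (fun j => TL (A i j) (x j)) = b i

/-- The candidate minimal point `X(e)` associated to a selection `e`
(empty max = 0, handled by the `if`). -/
noncomputable def Xe {m n : ℕ} [NeZero m] (A : Fin m → Fin n → ℝ) (b : Fin m → ℝ)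
    (e : Fin m → Fin n) (j : Fin n) : ℝ :=
  Finset.univ.sup' Finset.univ_nonempty
    (fun i => if e i = j ∧ b i ≠ 0 then b i + 1 - A i j else 0)

/-- `e` is a valid selection: `e i ∈ J̄ᵢ` for every `i`. -/
def ValidSel {m n : ℕ} [NeZero m] (A : Fin m → Fin n → ℝ) (b : Fin m → ℝ)
    (e : Fin m → Fin n) : Prop :=
  ∀ i, b i ≤ A i (e i) ∧ TL (A i (e i)) (xbar A b (e i)) = b i

/-!
A solution `x` lies below `x̄`, while `x̄` itself never overshoots: `T_L(a_ij, x̄_j) ≤ b_i`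
for all `i, j`. So an index `j` at which `x` attains `b_i` also attains it for `x̄`, by
monotonicity of `T_L`; and `b_i = T_L(a_ij, x_j) ≤ a_ij` because `x_j ≤ 1`.
-/

theorem TL_nonneg (a x : ℝ) : 0 ≤ TL a x := le_max_right _ _

theorem TL_le_iff {a x c : ℝ} (hc : 0 ≤ c) : TL a x ≤ c ↔ a + x - 1 ≤ c := by
  simp [TL, hc]

theorem TL_mono_right (a : ℝ) : Monotone (TL a) := fun _ _ h =>
  max_le_max (by linarith) le_rfl

theorem TL_le_left {a x : ℝ} (ha : 0 ≤ a) (hx : x ≤ 1) : TL a x ≤ a :=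
  (TL_le_iff ha).2 (by linarith)

section

variable {m n : ℕ} [NeZero m] {A : Fin m → Fin n → ℝ} {b : Fin m → ℝ}

theorem TL_xbar_le (hb : ∀ i, 0 ≤ b i) (i : Fin m) (j : Fin n) :
    TL (A i j) (xbar A b j) ≤ b i := by
  have hle : xbar A b j ≤ if b i ≤ A i j then b i + 1 - A i j else 1 :=
    Finset.inf'_le _ (Finset.mem_univ i)
  rw [TL_le_iff (hb i)]
  split_ifs at hle with h
  · linarith
  · linarith [not_le.1 h]

namespace Feasible

variable [NeZero n] {x : Fin n → ℝ}

theorem TL_le (hx : Feasible A b x) (i : Fin m) (j : Fin n) : TL (A i j) (x j) ≤ b i :=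
  hx.2 i ▸ Finset.le_sup' (fun k => TL (A i k) (x k)) (Finset.mem_univ j)

theorem exists_TL_eq (hx : Feasible A b x) (i : Fin m) : ∃ j, TL (A i j) (x j) = b i := by
  obtain ⟨j, -, hj⟩ := Finset.exists_mem_eq_sup' Finset.univ_nonempty
    (fun j => TL (A i j) (x j))
  exact ⟨j, hj.symm.trans (hx.2 i)⟩

theorem nonneg (hx : Feasible A b x) (i : Fin m) : 0 ≤ b i :=
  (TL_nonneg _ _).trans (hx.TL_le i 0)

theorem le_xbar (hx : Feasible A b x) (j : Fin n) : x j ≤ xbar A b j := by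
  refine Finset.le_inf' _ _ fun i _ => ?_
  split_ifs with h
  · linarith [(TL_le_iff (hx.nonneg i)).1 (hx.TL_le i j)]
  · exact (hx.1 j).2

end Feasible

end

theorem stmt_9_general (m n : ℕ) [NeZero m] [NeZero n] (A : Fin m → Fin n → ℝ) (b : Fin m → ℝ)
    (hA : ∀ i j, A i j ∈ Set.Icc (0:ℝ) 1)
    (hS : ∃ x, Feasible A b x) :
    ∀ i, ∃ j, b i ≤ A i j ∧ TL (A i j) (xbar A b j) = b i := by
  intro i
  obtain ⟨x, hx⟩ := hS
  obtain ⟨j, hj⟩ := hx.exists_TL_eq i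
  refine ⟨j, hj ▸ TL_le_left (hA i j).1 (hx.1 j).2, ?_⟩
  refine le_antisymm (TL_xbar_le hx.nonneg i j) ?_
  calc b i = TL (A i j) (x j) := hj.symm
    _ ≤ TL (A i j) (xbar A b j) := TL_mono_right _ (hx.le_xbar j)

theorem stmt_9 (m n : ℕ) [NeZero m] [NeZero n] (A : Fin m → Fin n → ℝ) (b : Fin m → ℝ)
    (hA : ∀ i j, A i j ∈ Set.Icc (0:ℝ) 1) (hb : ∀ i, b i ∈ Set.Icc (0:ℝ) 1)
    (hS : ∃ x, Feasible A b x) :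
    ∀ i, ∃ j, b i ≤ A i j ∧ TL (A i j) (xbar A b j) = b i :=
  stmt_9_general m n A b hA hS
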